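/- If e ∈ Win_a([p,Q]_a) in the weak spectroscopy energy game G△, then there exists a formula φ ∈ Strat([p,Q]_a, e) with expr(φ) ≤ e. -/

import Mathlib

open Classical

noncomputable section

namespace Spectroscopy

/-! ### Energies and declining energy games -/

/-- Energies: 8-dimensional vectors over `ℕ ∪ {∞}`, ordered componentwise. -/
abbrev Energy : Type := Fin 8 → ℕ∞

/-- The `i`-th unit vector. -/
def unitE (i : Fin 8) : Energy := fun k => if k = i then 1 else 0

/-- The vector with value `v` at position `i` and `0` elsewhere. -/
def onlyAt (i : Fin 8) (v : ℕ∞) : Energy := fun k => if k = i then v else 0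

/-- Components of energy updates: `-1`, `0`, or minimum selection `min_D`.
For the component at position `k`, `minWith D` selects the minimum over the
positions `{k} ∪ D`, so the requirement `k ∈ D` of the paper holds by
construction. -/
inductive UpdComp : Type
  | decr : UpdComp
  | zero : UpdComp
  | minWith (D : Finset (Fin 8)) : UpdComp
deriving DecidableEq

/-- Energy updates. -/
abbrev Update : Type := Fin 8 → UpdComp

/-- Partial application of an update to an energy (`none` when a component
would become negative). -/
def upd (e : Energy) (u : Update) : Option Energy :=
  if ∀ k, u k = UpdComp.decr → e k ≠ 0 then
    some (fun k =>
      match u k with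
      | UpdComp.decr => e k - 1
      | UpdComp.zero => e k
      | UpdComp.minWith D => (insert k D).inf e)
  else none

/-- A declining energy game: positions, a defender predicate (attacker
positions are the non-defender ones), and moves labeled with updates. -/
structure EGame (Pos : Type) where
  defender : Pos → Prop
  move : Pos → Update → Pos → Prop

/-- Attacker winning budgets `Win_a`: at an attacker position some move must
lead to an attacker-won position under the updated energy; at a defender
position every move must (be defined and) lead to an attacker-won position. -/
inductive EGame.Win {Pos : Type} (G : EGame Pos) : Pos → Energy → Prop
  | attack {g : Pos} {u : Update} {g' : Pos} {e e' : Energy} :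
      ¬ G.defender g → G.move g u g' → upd e u = some e' → G.Win g' e' →
      G.Win g e
  | defend {g : Pos} {e : Energy} :
      G.defender g →
      (∀ u g', G.move g u g' → upd e u ≠ none) →
      (∀ u g' e', G.move g u g' → upd e u = some e' → G.Win g' e') →
      G.Win g e

/-! ### Labeled transition systems with silent steps -/

section LTS

variable {Proc Act : Type}

/-- Weak internal steps `↠`: reflexive-transitive closure of `τ`-steps. -/
def Star (Tr : Proc → Act → Proc → Prop) (τ : Act) : Proc → Proc → Prop :=
  Relation.ReflTransGen fun p p' => Tr p τ p'

/-- A process is stable if it has no `τ`-step. -/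
def Stable (Tr : Proc → Act → Proc → Prop) (τ : Act) (p : Proc) : Prop :=
  ∀ p', ¬ Tr p τ p'

/-- Optional step `p →(α) p'`: a real `α`-step, or `α = τ` and `p = p'`. -/
def OptStep (Tr : Proc → Act → Proc → Prop) (τ : Act) (p : Proc) (α : Act) (p' : Proc) : Prop :=
  Tr p α p' ∨ (α = τ ∧ p = p')

/-- Lift of `→a` to sets. -/
def SetStep (Tr : Proc → Act → Proc → Prop) (Q : Set Proc) (a : Act) (Q' : Set Proc) : Prop :=
  Q' = {q' | ∃ q ∈ Q, Tr q a q'}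

/-- Lift of `↠` to sets. -/
def SetStar (Tr : Proc → Act → Proc → Prop) (τ : Act) (Q Q' : Set Proc) : Prop :=
  Q' = {q' | ∃ q ∈ Q, Star Tr τ q q'}

/-- Lift of `→(α)` to sets. -/
def SetOpt (Tr : Proc → Act → Proc → Prop) (τ : Act) (Q : Set Proc) (α : Act)
    (Q' : Set Proc) : Prop :=
  Q' = {q' | ∃ q ∈ Q, OptStep Tr τ q α q'}

end LTS

/-! ### The logic HML_srbb -/

mutual
/-- Formulas `φ` of HML_srbb: `⟨ε⟩χ` or immediate conjunctions `⋀Ψ`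
(conjunctions are indexed by an arbitrary type). `⊤` is the empty conjunction. -/
inductive Formula (Act : Type) (τ : Act) : Type 1
  | delayed : DFormula Act τ → Formula Act τ
  | conj : (I : Type) → (I → Conjunct Act τ) → Formula Act τ

/-- Delayed formulas `χ`: observations `⟨a⟩φ` (with `a ≠ τ`), standard
conjunctions `⋀Ψ`, stable conjunctions `⋀({¬⟨τ⟩⊤} ∪ Ψ)`, and branching
conjunctions `⋀({(α)φ} ∪ Ψ)`. -/
inductive DFormula (Act : Type) (τ : Act) : Type 1
  | obs : (a : Act) → a ≠ τ → Formula Act τ → DFormula Act τ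
  | conj : (I : Type) → (I → Conjunct Act τ) → DFormula Act τ
  | stableConj : (I : Type) → (I → Conjunct Act τ) → DFormula Act τ
  | branchConj : (α : Act) → Formula Act τ → (I : Type) → (I → Conjunct Act τ) → DFormula Act τ

/-- Conjuncts `ψ`: positive `⟨ε⟩χ` or negative `¬⟨ε⟩χ`. -/
inductive Conjunct (Act : Type) (τ : Act) : Type 1
  | pos : DFormula Act τ → Conjunct Act τ
  | neg : DFormula Act τ → Conjunct Act τ
end

section Semantics

variable {Proc Act : Type}

mutual
/-- Semantics `⟦φ⟧`. -/
def Sat (Tr : Proc → Act → Proc → Prop) (τ : Act) (p : Proc) : Formula Act τ → Prop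
  | .delayed χ => ∃ p', Star Tr τ p p' ∧ SatD Tr τ p' χ
  | .conj _ ps => ∀ i, SatC Tr τ p (ps i)

/-- Semantics `⟦χ⟧^ε` of delayed formulas. -/
def SatD (Tr : Proc → Act → Proc → Prop) (τ : Act) (p : Proc) : DFormula Act τ → Prop
  | .obs a _ φ => ∃ p', Tr p a p' ∧ Sat Tr τ p' φ
  | .conj _ ps => ∀ i, SatC Tr τ p (ps i)
  | .stableConj _ ps => Stable Tr τ p ∧ ∀ i, SatC Tr τ p (ps i)
  | .branchConj α φ _ ps =>
      (∃ p', OptStep Tr τ p α p' ∧ Sat Tr τ p' φ) ∧ ∀ i, SatC Tr τ p (ps i)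

/-- Semantics `⟦ψ⟧^∧` of conjuncts. -/
def SatC (Tr : Proc → Act → Proc → Prop) (τ : Act) (p : Proc) : Conjunct Act τ → Prop
  | .pos χ => ∃ p', Star Tr τ p p' ∧ SatD Tr τ p' χ
  | .neg χ => ¬ ∃ p', Star Tr τ p p' ∧ SatD Tr τ p' χ
end

/-- `φ` distinguishes `p` from the set `Q`. -/
def Distinguishes (Tr : Proc → Act → Proc → Prop) (τ : Act) (φ : Formula Act τ)
    (p : Proc) (Q : Set Proc) : Prop :=
  Sat Tr τ p φ ∧ ∀ q ∈ Q, ¬ Sat Tr τ q φ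

/-- The delayed formula `χ` distinguishes `p` from the set `Q` w.r.t. `⟦·⟧^ε`. -/
def DistinguishesD (Tr : Proc → Act → Proc → Prop) (τ : Act) (χ : DFormula Act τ)
    (p : Proc) (Q : Set Proc) : Prop :=
  SatD Tr τ p χ ∧ ∀ q ∈ Q, ¬ SatD Tr τ q χ

/-- The conjunct `ψ` distinguishes `p` from `q` w.r.t. `⟦·⟧^∧`. -/
def DistinguishesC (Tr : Proc → Act → Proc → Prop) (τ : Act) (ψ : Conjunct Act τ)
    (p q : Proc) : Prop :=
  SatC Tr τ p ψ ∧ ¬ SatC Tr τ q ψ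

/-- Stability-respecting branching bisimulations: symmetric relations with the
branching-bisimulation transfer property and the stability-respecting
property. -/
def IsSRBBisim (Tr : Proc → Act → Proc → Prop) (τ : Act) (R : Proc → Proc → Prop) : Prop :=
  Symmetric R ∧
  (∀ p q, R p q → ∀ α p', Tr p α p' →
    (α = τ ∧ R p' q) ∨
      ∃ q' q'', Star Tr τ q q' ∧ Tr q' α q'' ∧ R p q' ∧ R p' q'') ∧
  (∀ p q, R p q → Stable Tr τ p →
    ∃ q', Star Tr τ q q' ∧ Stable Tr τ q' ∧ R p q')

end Semantics

/-! ### Expressiveness prices -/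

section Expr

variable {Act : Type} {τ : Act}

mutual
/-- Expressiveness price `expr` of formulas. -/
def exprF : Formula Act τ → Energy
  | .delayed χ => exprE χ
  | .conj I ps => ⨆ _ : Nonempty I, ((unitE 4 + unitE 2) + ⨆ i, exprC (ps i))

/-- Expressiveness price `expr^ε` of delayed formulas. -/
def exprE : DFormula Act τ → Energy
  | .obs _ _ φ => unitE 0 + exprF φ
  | .conj I ps => ⨆ _ : Nonempty I, (unitE 2 + ⨆ i, exprC (ps i))
  | .stableConj _ ps => unitE 3 + ⨆ i, exprC (ps i)
  | .branchConj _ φ _ ps =>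
      (unitE 1 + unitE 2) +
        (((unitE 0 + exprF φ) ⊔ onlyAt 5 (1 + exprF φ 0)) ⊔ ⨆ i, exprC (ps i))

/-- Expressiveness price `expr^∧` of conjuncts. -/
def exprC : Conjunct Act τ → Energy
  | .pos χ => exprE χ ⊔ onlyAt 5 (exprE χ 0)
  | .neg χ => (unitE 7 + exprE χ) ⊔ onlyAt 6 (exprE χ 0)
end

end Expr

/-! ### The weak spectroscopy energy game -/

/-- Positions of the weak spectroscopy game. -/
inductive GPos (Proc Act : Type) : Type
  | att (p : Proc) (Q : Set Proc)                                 -- `[p,Q]_a`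
  | attD (p : Proc) (Q : Set Proc)                                -- `[p,Q]^ε_a`
  | attC (p q : Proc)                                             -- `[p,q]^∧_a`
  | attB (p : Proc) (Q : Set Proc)                                -- `[p,Q]^η_a`
  | defC (p : Proc) (Q : Set Proc)                                -- `(p,Q)_d`
  | defS (p : Proc) (Q : Set Proc)                                -- `(p,Q)^s_d`
  | defB (p : Proc) (α : Act) (p' : Proc) (Q Qa : Set Proc)       -- `(p,α,p',Q,Qa)^η_d`

/-- The zero update. -/
def zeroU : Update := fun _ => UpdComp.zero

/-- The update `-ê_i`. -/
def decU (i : Fin 8) : Update := fun k => if k = i then UpdComp.decr else UpdComp.zero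

/-- The update `(min_{1,6},0,0,0,0,0,0,0)`. -/
def minU16 : Update := fun k => if k = 0 then UpdComp.minWith {5} else UpdComp.zero

/-- The update `(min_{1,7},0,0,0,0,0,0,-1)`. -/
def minU17dec8 : Update := fun k =>
  if k = 0 then UpdComp.minWith {6} else if k = 7 then UpdComp.decr else UpdComp.zero

/-- The update `(0,-1,-1,0,0,0,0,0)`. -/
def dec23 : Update := fun k => if k = 1 ∨ k = 2 then UpdComp.decr else UpdComp.zero

/-- The update `(min_{1,6},-1,-1,0,0,0,0,0)`. -/
def minU16dec23 : Update := fun k =>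
  if k = 0 then UpdComp.minWith {5}
  else if k = 1 ∨ k = 2 then UpdComp.decr else UpdComp.zero

section Game

variable {Proc Act : Type}

/-- Moves of the weak spectroscopy game. -/
inductive GMove (Tr : Proc → Act → Proc → Prop) (τ : Act) :
    GPos Proc Act → Update → GPos Proc Act → Prop
  | delay {p : Proc} {Q Q' : Set Proc} :
      SetStar Tr τ Q Q' →
      GMove Tr τ (.att p Q) zeroU (.attD p Q')
  | procrastination {p p' : Proc} {Q : Set Proc} :
      Tr p τ p' → p ≠ p' →
      GMove Tr τ (.attD p Q) zeroU (.attD p' Q)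
  | observation {p p' : Proc} {a : Act} {Q Q' : Set Proc} :
      Tr p a p' → a ≠ τ → SetStep Tr Q a Q' →
      GMove Tr τ (.attD p Q) (decU 0) (.att p' Q')
  | finishing {p : Proc} :
      GMove Tr τ (.att p ∅) zeroU (.defC p ∅)
  | immediateConj {p : Proc} {Q : Set Proc} :
      Q ≠ ∅ →
      GMove Tr τ (.att p Q) (decU 4) (.defC p Q)
  | lateConj {p : Proc} {Q : Set Proc} :
      GMove Tr τ (.attD p Q) zeroU (.defC p Q)
  | conjAnswer {p q : Proc} {Q : Set Proc} :
      q ∈ Q →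
      GMove Tr τ (.defC p Q) (decU 2) (.attC p q)
  | posConjunct {p q : Proc} {Q : Set Proc} :
      SetStar Tr τ {q} Q →
      GMove Tr τ (.attC p q) minU16 (.attD p Q)
  | negConjunct {p q : Proc} {Q : Set Proc} :
      SetStar Tr τ {p} Q → p ≠ q →
      GMove Tr τ (.attC p q) minU17dec8 (.attD q Q)
  | stableConj {p : Proc} {Q : Set Proc} :
      Stable Tr τ p →
      GMove Tr τ (.attD p Q) zeroU (.defS p {q ∈ Q | Stable Tr τ q})
  | conjStableAnswer {p q : Proc} {Q : Set Proc} :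
      q ∈ Q →
      GMove Tr τ (.defS p Q) (decU 3) (.attC p q)
  | stableFinishing {p : Proc} :
      GMove Tr τ (.defS p ∅) (decU 3) (.defC p ∅)
  | branchConj {p p' : Proc} {α : Act} {Q Qa : Set Proc} :
      OptStep Tr τ p α p' → Qa ⊆ Q →
      GMove Tr τ (.attD p Q) zeroU (.defB p α p' (Q \ Qa) Qa)
  | branchAnswer {p p' q : Proc} {α : Act} {Q Qa : Set Proc} :
      q ∈ Q →
      GMove Tr τ (.defB p α p' Q Qa) dec23 (.attC p q)
  | branchObservation {p p' : Proc} {α : Act} {Q Qa Q' : Set Proc} :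
      SetOpt Tr τ Qa α Q' →
      GMove Tr τ (.defB p α p' Q Qa) minU16dec23 (.attB p' Q')
  | branchAccounting {p : Proc} {Q : Set Proc} :
      GMove Tr τ (.attB p Q) (decU 0) (.att p Q)

/-- Defender positions of the weak spectroscopy game. -/
def isDefender : GPos Proc Act → Prop
  | .defC _ _ => True
  | .defS _ _ => True
  | .defB _ _ _ _ _ => True
  | _ => False

/-- The weak spectroscopy energy game `G△`. -/
def specGame (Tr : Proc → Act → Proc → Prop) (τ : Act) : EGame (GPos Proc Act) where
  defender := isDefender
  move := GMove Tr τ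

end Game

/-! ### Strategy formulas -/

section Strat

variable {Proc Act : Type}

mutual
/-- Attacker strategy formulas (formula sort). -/
inductive StratF (Tr : Proc → Act → Proc → Prop) (τ : Act) :
    GPos Proc Act → Energy → Formula Act τ → Prop
  | delay {p : Proc} {Q Q' : Set Proc} {u : Update} {e e' : Energy} {χ : DFormula Act τ} :
      GMove Tr τ (.att p Q) u (.attD p Q') →
      upd e u = some e' →
      (specGame Tr τ).Win (.attD p Q') e' →
      StratD Tr τ (.attD p Q') e' χ →
      StratF Tr τ (.att p Q) e (.delayed χ)
  | immediateConj {p : Proc} {Q : Set Proc} {u : Update} {e e' : Energy}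
      {I : Type} {ps : I → Conjunct Act τ} :
      GMove Tr τ (.att p Q) u (.defC p Q) →
      upd e u = some e' →
      (specGame Tr τ).Win (.defC p Q) e' →
      StratD Tr τ (.defC p Q) e' (.conj I ps) →
      StratF Tr τ (.att p Q) e (.conj I ps)

/-- Attacker strategy formulas (delayed-formula sort). -/
inductive StratD (Tr : Proc → Act → Proc → Prop) (τ : Act) :
    GPos Proc Act → Energy → DFormula Act τ → Prop
  | procrastination {p p' : Proc} {Q : Set Proc} {u : Update} {e e' : Energy}
      {χ : DFormula Act τ} :
      GMove Tr τ (.attD p Q) u (.attD p' Q) →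
      upd e u = some e' →
      (specGame Tr τ).Win (.attD p' Q) e' →
      StratD Tr τ (.attD p' Q) e' χ →
      StratD Tr τ (.attD p Q) e χ
  | observation {p p' : Proc} {a : Act} {Q Q' : Set Proc} {u : Update} {e e' : Energy}
      {φ : Formula Act τ} (ha : a ≠ τ) :
      GMove Tr τ (.attD p Q) u (.att p' Q') →
      Tr p a p' → SetStep Tr Q a Q' →
      upd e u = some e' →
      (specGame Tr τ).Win (.att p' Q') e' →
      StratF Tr τ (.att p' Q') e' φ →
      StratD Tr τ (.attD p Q) e (.obs a ha φ)
  | lateConj {p : Proc} {Q : Set Proc} {u : Update} {e e' : Energy} {χ : DFormula Act τ} :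
      GMove Tr τ (.attD p Q) u (.defC p Q) →
      upd e u = some e' →
      (specGame Tr τ).Win (.defC p Q) e' →
      StratD Tr τ (.defC p Q) e' χ →
      StratD Tr τ (.attD p Q) e χ
  | stable {p : Proc} {Q Q' : Set Proc} {u : Update} {e e' : Energy} {χ : DFormula Act τ} :
      GMove Tr τ (.attD p Q) u (.defS p Q') →
      upd e u = some e' →
      (specGame Tr τ).Win (.defS p Q') e' →
      StratD Tr τ (.defS p Q') e' χ →
      StratD Tr τ (.attD p Q) e χ
  | branch {p p' : Proc} {α : Act} {Q Q' Qa : Set Proc} {u : Update} {e e' : Energy}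
      {χ : DFormula Act τ} :
      GMove Tr τ (.attD p Q) u (.defB p α p' Q' Qa) →
      upd e u = some e' →
      (specGame Tr τ).Win (.defB p α p' Q' Qa) e' →
      StratD Tr τ (.defB p α p' Q' Qa) e' χ →
      StratD Tr τ (.attD p Q) e χ
  | conj {p : Proc} {Q : Set Proc} {e : Energy}
      (us : {q // q ∈ Q} → Update) (es : {q // q ∈ Q} → Energy)
      (ψs : {q // q ∈ Q} → Conjunct Act τ) :
      (∀ qq : {q // q ∈ Q}, GMove Tr τ (.defC p Q) (us qq) (.attC p qq.1)) →
      (∀ qq : {q // q ∈ Q}, upd e (us qq) = some (es qq)) →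
      (∀ qq : {q // q ∈ Q}, (specGame Tr τ).Win (.attC p qq.1) (es qq)) →
      (∀ qq : {q // q ∈ Q}, StratC Tr τ (.attC p qq.1) (es qq) (ψs qq)) →
      StratD Tr τ (.defC p Q) e (.conj {q // q ∈ Q} ψs)
  | stableConj {p : Proc} {Q : Set Proc} {e : Energy}
      (hne : Q.Nonempty)
      (us : {q // q ∈ Q} → Update) (es : {q // q ∈ Q} → Energy)
      (ψs : {q // q ∈ Q} → Conjunct Act τ) :
      (∀ qq : {q // q ∈ Q}, GMove Tr τ (.defS p Q) (us qq) (.attC p qq.1)) →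
      (∀ qq : {q // q ∈ Q}, upd e (us qq) = some (es qq)) →
      (∀ qq : {q // q ∈ Q}, (specGame Tr τ).Win (.attC p qq.1) (es qq)) →
      (∀ qq : {q // q ∈ Q}, StratC Tr τ (.attC p qq.1) (es qq) (ψs qq)) →
      StratD Tr τ (.defS p Q) e (.stableConj {q // q ∈ Q} ψs)
  | stableFinish {p : Proc} {u : Update} {e e' : Energy} :
      GMove Tr τ (.defS p ∅) u (.defC p ∅) →
      upd e u = some e' →
      (specGame Tr τ).Win (.defC p (∅ : Set Proc)) e' →
      StratD Tr τ (.defS p ∅) e (.stableConj Empty fun x => x.elim)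
  | branchConj {p p' : Proc} {α : Act} {Q Qa Q' : Set Proc} {ua ua' : Update}
      {e e1 ea : Energy} {φa : Formula Act τ}
      (us : {q // q ∈ Q} → Update) (es : {q // q ∈ Q} → Energy)
      (ψs : {q // q ∈ Q} → Conjunct Act τ) :
      GMove Tr τ (.defB p α p' Q Qa) ua (.attB p' Q') →
      GMove Tr τ (.attB p' Q') ua' (.att p' Q') →
      upd e ua = some e1 →
      upd e1 ua' = some ea →
      (specGame Tr τ).Win (.att p' Q') ea →
      StratF Tr τ (.att p' Q') ea φa →
      (∀ qq : {q // q ∈ Q}, GMove Tr τ (.defB p α p' Q Qa) (us qq) (.attC p qq.1)) →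
      (∀ qq : {q // q ∈ Q}, upd e (us qq) = some (es qq)) →
      (∀ qq : {q // q ∈ Q}, (specGame Tr τ).Win (.attC p qq.1) (es qq)) →
      (∀ qq : {q // q ∈ Q}, StratC Tr τ (.attC p qq.1) (es qq) (ψs qq)) →
      StratD Tr τ (.defB p α p' Q Qa) e (.branchConj α φa {q // q ∈ Q} ψs)

/-- Attacker strategy formulas (conjunct sort). -/
inductive StratC (Tr : Proc → Act → Proc → Prop) (τ : Act) :
    GPos Proc Act → Energy → Conjunct Act τ → Prop
  | pos {p q : Proc} {Q' : Set Proc} {u : Update} {e e' : Energy} {χ : DFormula Act τ} :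
      GMove Tr τ (.attC p q) u (.attD p Q') →
      upd e u = some e' →
      (specGame Tr τ).Win (.attD p Q') e' →
      StratD Tr τ (.attD p Q') e' χ →
      StratC Tr τ (.attC p q) e (.pos χ)
  | neg {p q : Proc} {P' : Set Proc} {u : Update} {e e' : Energy} {χ : DFormula Act τ} :
      GMove Tr τ (.attC p q) u (.attD q P') →
      upd e u = some e' →
      (specGame Tr τ).Win (.attD q P') e' →
      StratD Tr τ (.attD q P') e' χ →
      StratC Tr τ (.attC p q) e (.neg χ)
end

end Strat

/-!
Induction on the derivation of `e ∈ Win_a(g)`, producing at every position a strategy formula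
of price at most `e`. Each rule of `Strat` mirrors a move, and the energy that move withdraws
pays for the syntax the rule adds: `ê₁` per observation, `ê₃` or `ê₄` per conjunction, `ê₅` for an
immediate and `ê₂ + ê₃` for a branching one, `ê₈` per negation; the `min` updates of the
conjunct moves bound the sixth and seventh components, which `expr^∧` copies from the first.
All answers of a defender position carry the same update, so the conjuncts of a conjunction
are priced against one common energy.
-/

section Energy

def decrVec (u : Update) : Energy := fun k => if u k = UpdComp.decr then 1 else 0

variable {e e' : Energy} {u : Update}

lemma upd_eq_some (h : upd e u = some e') :
    (∀ k, u k = UpdComp.decr → e k ≠ 0) ∧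
      e' = fun k => match u k with
        | UpdComp.decr => e k - 1
        | UpdComp.zero => e k
        | UpdComp.minWith D => (insert k D).inf e := by
  unfold upd at h
  split_ifs at h with hdef
  exact ⟨hdef, (Option.some.inj h).symm⟩

lemma upd_zeroU (e : Energy) : upd e zeroU = some e := by
  simp [upd, zeroU]

lemma eq_of_upd_zeroU (h : upd e zeroU = some e') : e' = e :=
  (Option.some.inj ((upd_zeroU e).symm.trans h)).symm

lemma decrVec_add_le (h : upd e u = some e') : decrVec u + e' ≤ e := by
  obtain ⟨hdef, rfl⟩ := upd_eq_some h
  intro k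
  simp only [decrVec, Pi.add_apply]
  cases hk : u k with
  | decr =>
    simpa [add_comm] using (tsub_add_cancel_of_le (Order.one_le_iff_ne_zero.mpr (hdef k hk))).le
  | zero => simp
  | minWith D => simp

lemma le_of_upd (h : upd e u = some e') : e' ≤ e :=
  le_add_self.trans (decrVec_add_le h)

lemma upd_apply_le_of_minWith {k d : Fin 8} {D : Finset (Fin 8)} (h : upd e u = some e')
    (hk : u k = UpdComp.minWith D) (hd : d ∈ D) : e' k ≤ e d := by
  obtain ⟨-, rfl⟩ := upd_eq_some h
  simpa [hk] using Finset.inf_le (f := e) (Finset.mem_insert_of_mem hd)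

lemma decrVec_decU (i : Fin 8) : decrVec (decU i) = unitE i := by
  funext k; by_cases hk : k = i <;> simp [decrVec, decU, unitE, hk]

lemma decrVec_minU17dec8 : decrVec minU17dec8 = unitE 7 := by
  funext k; fin_cases k <;> simp [decrVec, minU17dec8, unitE]

lemma decrVec_dec23 : decrVec dec23 = unitE 1 + unitE 2 := by
  funext k; fin_cases k <;> simp [decrVec, dec23, unitE]

lemma decrVec_minU16dec23 : decrVec minU16dec23 = unitE 1 + unitE 2 := by
  funext k; fin_cases k <;> simp [decrVec, minU16dec23, unitE]

lemma unitE_add_le_of_upd {i : Fin 8} (h : upd e (decU i) = some e') : unitE i + e' ≤ e :=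
  decrVec_decU i ▸ decrVec_add_le h

lemma onlyAt_le_iff {i : Fin 8} {v : ℕ∞} : onlyAt i v ≤ e ↔ v ≤ e i := by
  refine ⟨fun h => by simpa [onlyAt] using h i, fun h k => ?_⟩
  by_cases hk : k = i <;> simp [onlyAt, hk, h]

lemma add_sup_le {c a b : Energy} (ha : c + a ≤ e) (hb : c + b ≤ e) : c + (a ⊔ b) ≤ e :=
  fun k => by simpa only [Pi.add_apply, Pi.sup_apply, add_max] using max_le (ha k) (hb k)

lemma add_onlyAt_le {c : Energy} {i : Fin 8} {v : ℕ∞} (hc : c ≤ e) (hi : c i + v ≤ e i) :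
    c + onlyAt i v ≤ e := by
  intro k
  by_cases hk : k = i
  · subst hk; simpa [onlyAt] using hi
  · simpa [onlyAt, hk] using hc k

lemma decrVec_add_iSup_le {I : Type} {es x : I → Energy} (hc : decrVec u ≤ e)
    (hu : ∀ i, upd e u = some (es i)) (hx : ∀ i, x i ≤ es i) : decrVec u + ⨆ i, x i ≤ e := by
  rcases isEmpty_or_nonempty I with hI | ⟨⟨i⟩⟩
  · rwa [iSup_of_empty, bot_eq_zero, add_zero]
  · have hes : ∀ j, es j = es i := fun j => Option.some.inj ((hu j).symm.trans (hu i))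
    calc decrVec u + ⨆ j, x j ≤ decrVec u + es i :=
          by gcongr; exact iSup_le fun j => hes j ▸ hx j
      _ ≤ e := decrVec_add_le (hu i)

end Energy

section Price

variable {Act : Type} {τ : Act} {e e' : Energy}

lemma exprE_obs_le {a : Act} {ha : a ≠ τ} {φ : Formula Act τ} (h : upd e (decU 0) = some e')
    (hφ : exprF φ ≤ e') : exprE (.obs a ha φ) ≤ e := by
  rw [exprE]
  exact (add_le_add_right hφ _).trans (unitE_add_le_of_upd h)

lemma exprF_conj_le {I : Type} {ps : I → Conjunct Act τ} (h : upd e (decU 4) = some e')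
    (hχ : exprE (.conj I ps) ≤ e') : exprF (.conj I ps) ≤ e := by
  rw [exprF]
  refine iSup_le fun hI => ?_
  calc (unitE 4 + unitE 2) + ⨆ i, exprC (ps i)
      = unitE 4 + (unitE 2 + ⨆ i, exprC (ps i)) := add_assoc _ _ _
    _ ≤ unitE 4 + e' := by
        gcongr
        rw [exprE] at hχ
        exact (le_iSup (fun _ : Nonempty I => unitE 2 + ⨆ i, exprC (ps i)) hI).trans hχ
    _ ≤ e := unitE_add_le_of_upd h

lemma exprF_conj_of_isEmpty {I : Type} [IsEmpty I] (ps : I → Conjunct Act τ) :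
    exprF (.conj I ps) = 0 := by
  rw [exprF, iSup_neg (not_nonempty_iff.2 ‹_›), bot_eq_zero]

lemma exprE_conj_le {I : Type} {ps : I → Conjunct Act τ} {es : I → Energy}
    (hu : ∀ i, upd e (decU 2) = some (es i)) (hψ : ∀ i, exprC (ps i) ≤ es i) :
    exprE (.conj I ps) ≤ e := by
  rw [exprE]
  refine iSup_le fun ⟨i⟩ => ?_
  rw [← decrVec_decU]
  exact decrVec_add_iSup_le (le_self_add.trans (decrVec_add_le (hu i))) hu hψ

lemma exprE_stableConj_le {I : Type} {ps : I → Conjunct Act τ} {es : I → Energy}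
    (hc : unitE 3 ≤ e) (hu : ∀ i, upd e (decU 3) = some (es i))
    (hψ : ∀ i, exprC (ps i) ≤ es i) : exprE (.stableConj I ps) ≤ e := by
  rw [exprE, ← decrVec_decU]
  exact decrVec_add_iSup_le (decrVec_decU 3 ▸ hc) hu hψ

/-- The `min_{1,6}` of the branching observation pays for the sixth component of `(α)φ`,
and the accounting move for its first. -/
lemma exprE_branchConj_le {α : Act} {φ : Formula Act τ} {I : Type} {ps : I → Conjunct Act τ}
    {e₁ eα : Energy} {es : I → Energy} (h₁ : upd e minU16dec23 = some e₁)
    (hα : upd e₁ (decU 0) = some eα) (hφ : exprF φ ≤ eα)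
    (hu : ∀ i, upd e dec23 = some (es i)) (hψ : ∀ i, exprC (ps i) ≤ es i) :
    exprE (.branchConj α φ I ps) ≤ e := by
  have hc : unitE 1 + unitE 2 + e₁ ≤ e := decrVec_minU16dec23 ▸ decrVec_add_le h₁
  have hobs : unitE 0 + exprF φ ≤ e₁ := (add_le_add_right hφ _).trans (unitE_add_le_of_upd hα)
  rw [exprE]
  refine add_sup_le (add_sup_le ((add_le_add_right hobs _).trans hc) ?_) ?_
  · refine add_onlyAt_le (le_self_add.trans hc) ?_
    simpa [unitE] using (hobs 0).trans (upd_apply_le_of_minWith h₁ (by simp [minU16dec23])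
      (Finset.mem_singleton_self 5))
  · rw [← decrVec_dec23]
    exact decrVec_add_iSup_le (decrVec_dec23 ▸ le_self_add.trans hc) hu hψ

lemma exprC_pos_le {χ : DFormula Act τ} (h : upd e minU16 = some e') (hχ : exprE χ ≤ e') :
    exprC (.pos χ) ≤ e := by
  rw [exprC]
  refine sup_le (hχ.trans (le_of_upd h)) (onlyAt_le_iff.2 ?_)
  exact (hχ 0).trans (upd_apply_le_of_minWith h (by simp [minU16]) (Finset.mem_singleton_self 5))

lemma exprC_neg_le {χ : DFormula Act τ} (h : upd e minU17dec8 = some e')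
    (hχ : exprE χ ≤ e') : exprC (.neg χ) ≤ e := by
  rw [exprC]
  refine sup_le ((add_le_add_right hχ _).trans (decrVec_minU17dec8 ▸ decrVec_add_le h))
    (onlyAt_le_iff.2 ?_)
  exact (hχ 0).trans
    (upd_apply_le_of_minWith h (by simp [minU17dec8]) (Finset.mem_singleton_self 6))

end Price

section Game

variable {Proc Act : Type} {Tr : Proc → Act → Proc → Prop} {τ : Act}

/-- At `[p,Q]^η_a` the claim is read after the accounting move, and at `(p,Q)_d` the formula
must be a conjunction over `Q`, the shape the conjunction rules of `StratF`/`StratD` consume. -/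
def CheapStrat (Tr : Proc → Act → Proc → Prop) (τ : Act) : GPos Proc Act → Energy → Prop
  | .att p Q, e => ∃ φ : Formula Act τ, StratF Tr τ (.att p Q) e φ ∧ exprF φ ≤ e
  | .attD p Q, e => ∃ χ : DFormula Act τ, StratD Tr τ (.attD p Q) e χ ∧ exprE χ ≤ e
  | .attC p q, e => ∃ ψ : Conjunct Act τ, StratC Tr τ (.attC p q) e ψ ∧ exprC ψ ≤ e
  | .attB p Q, e => ∃ e', upd e (decU 0) = some e' ∧ (specGame Tr τ).Win (.att p Q) e' ∧
      ∃ φ : Formula Act τ, StratF Tr τ (.att p Q) e' φ ∧ exprF φ ≤ e'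
  | .defC p Q, e => ∃ ψs : {q // q ∈ Q} → Conjunct Act τ,
      StratD Tr τ (.defC p Q) e (.conj _ ψs) ∧ exprE (.conj _ ψs) ≤ e
  | .defS p Q, e => ∃ χ : DFormula Act τ, StratD Tr τ (.defS p Q) e χ ∧ exprE χ ≤ e
  | .defB p α p' Q Qa, e => ∃ χ : DFormula Act τ,
      StratD Tr τ (.defB p α p' Q Qa) e χ ∧ exprE χ ≤ e

lemma cheapStrat_of_move {g g' : GPos Proc Act} {u : Update} {e e' : Energy}
    (hnd : ¬ isDefender g) (hm : GMove Tr τ g u g') (hu : upd e u = some e')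
    (hw : (specGame Tr τ).Win g' e') (ih : CheapStrat Tr τ g' e') : CheapStrat Tr τ g e := by
  cases hm with
  | delay hQ =>
    obtain ⟨χ, hs, hχ⟩ := ih
    exact ⟨.delayed χ, .delay (.delay hQ) hu hw hs, eq_of_upd_zeroU hu ▸ hχ⟩
  | procrastination hp hne =>
    obtain ⟨χ, hs, hχ⟩ := ih
    exact ⟨χ, .procrastination (.procrastination hp hne) hu hw hs, eq_of_upd_zeroU hu ▸ hχ⟩
  | observation hp ha hQ =>
    obtain ⟨φ, hs, hφ⟩ := ih
    exact ⟨.obs _ ha φ, .observation ha (.observation hp ha hQ) hp hQ hu hw hs,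
      exprE_obs_le hu hφ⟩
  | finishing =>
    obtain ⟨ψs, hs, -⟩ := ih
    exact ⟨.conj _ ψs, .immediateConj .finishing hu hw hs,
      (exprF_conj_of_isEmpty ψs).trans_le zero_le⟩
  | immediateConj hQ =>
    obtain ⟨ψs, hs, hχ⟩ := ih
    exact ⟨.conj _ ψs, .immediateConj (.immediateConj hQ) hu hw hs, exprF_conj_le hu hχ⟩
  | lateConj =>
    obtain ⟨ψs, hs, hχ⟩ := ih
    exact ⟨.conj _ ψs, .lateConj .lateConj hu hw hs, eq_of_upd_zeroU hu ▸ hχ⟩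
  | posConjunct hQ =>
    obtain ⟨χ, hs, hχ⟩ := ih
    exact ⟨.pos χ, .pos (.posConjunct hQ) hu hw hs, exprC_pos_le hu hχ⟩
  | negConjunct hQ hne =>
    obtain ⟨χ, hs, hχ⟩ := ih
    exact ⟨.neg χ, .neg (.negConjunct hQ hne) hu hw hs, exprC_neg_le hu hχ⟩
  | stableConj hp =>
    obtain ⟨χ, hs, hχ⟩ := ih
    exact ⟨χ, .stable (.stableConj hp) hu hw hs, eq_of_upd_zeroU hu ▸ hχ⟩
  | branchConj hp hQ =>
    obtain ⟨χ, hs, hχ⟩ := ih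
    exact ⟨χ, .branch (.branchConj hp hQ) hu hw hs, eq_of_upd_zeroU hu ▸ hχ⟩
  | branchAccounting => exact ⟨e', hu, hw, ih⟩
  | _ => exact absurd trivial hnd

variable {e : Energy}

lemma cheapStrat_defC {p : Proc} {Q : Set Proc}
    (h : ∀ u g', GMove Tr τ (.defC p Q) u g' →
      ∃ e', upd e u = some e' ∧ (specGame Tr τ).Win g' e' ∧ CheapStrat Tr τ g' e') :
    CheapStrat Tr τ (.defC p Q) e := by
  choose es hu hw ψs hs hψ using fun q : {q // q ∈ Q} => h _ _ (.conjAnswer q.2)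
  exact ⟨ψs, .conj _ es ψs (fun q => .conjAnswer q.2) hu hw hs, exprE_conj_le hu hψ⟩

lemma cheapStrat_defS {p : Proc} {Q : Set Proc}
    (h : ∀ u g', GMove Tr τ (.defS p Q) u g' →
      ∃ e', upd e u = some e' ∧ (specGame Tr τ).Win g' e' ∧ CheapStrat Tr τ g' e') :
    CheapStrat Tr τ (.defS p Q) e := by
  rcases Q.eq_empty_or_nonempty with rfl | ⟨q₀, hq₀⟩
  · obtain ⟨e', hu, hw, -⟩ := h _ _ .stableFinishing
    exact ⟨_, .stableFinish .stableFinishing hu hw, exprE_stableConj_le (es := Empty.elim)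
      (le_self_add.trans (unitE_add_le_of_upd hu)) Empty.rec Empty.rec⟩
  · choose es hu hw ψs hs hψ using fun q : {q // q ∈ Q} => h _ _ (.conjStableAnswer q.2)
    exact ⟨_, .stableConj ⟨q₀, hq₀⟩ _ es ψs (fun q => .conjStableAnswer q.2) hu hw hs,
      exprE_stableConj_le (le_self_add.trans (unitE_add_le_of_upd (hu ⟨q₀, hq₀⟩))) hu hψ⟩

lemma cheapStrat_defB {p p' : Proc} {α : Act} {Q Qa : Set Proc}
    (h : ∀ u g', GMove Tr τ (.defB p α p' Q Qa) u g' →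
      ∃ e', upd e u = some e' ∧ (specGame Tr τ).Win g' e' ∧ CheapStrat Tr τ g' e') :
    CheapStrat Tr τ (.defB p α p' Q Qa) e := by
  obtain ⟨e₁, h₁, -, eα, hα, hwα, φ, hsφ, hφ⟩ := h _ _ (.branchObservation rfl)
  choose es hu hw ψs hs hψ using fun q : {q // q ∈ Q} => h _ _ (.branchAnswer q.2)
  exact ⟨_, .branchConj _ es ψs (.branchObservation rfl) .branchAccounting h₁ hα hwα hsφ
    (fun q => .branchAnswer q.2) hu hw hs, exprE_branchConj_le h₁ hα hφ hu hψ⟩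

lemma cheapStrat_of_win {g : GPos Proc Act} (h : (specGame Tr τ).Win g e) :
    CheapStrat Tr τ g e := by
  induction h with
  | attack hnd hm hu hw ih => exact cheapStrat_of_move hnd hm hu hw ih
  | @defend g e hd hdef hwin ih =>
    have hmoves : ∀ u g', GMove Tr τ g u g' →
        ∃ e', upd e u = some e' ∧ (specGame Tr τ).Win g' e' ∧ CheapStrat Tr τ g' e' :=
      fun u g' hm =>
        have ⟨e', hu⟩ := Option.ne_none_iff_exists'.mp (hdef u g' hm)
        ⟨e', hu, hwin u g' e' hm hu, ih u g' e' hm hu⟩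
    cases g with
    | defC => exact cheapStrat_defC hmoves
    | defS => exact cheapStrat_defS hmoves
    | defB => exact cheapStrat_defB hmoves
    | _ => exact hd.elim

end Game

/-- winning budgets at `[p,Q]_a` yield strategy formulas of
price at most `e`. -/
theorem win_implies_strategy_formula {Proc Act : Type} (Tr : Proc → Act → Proc → Prop)
    (τ : Act) (p : Proc) (Q : Set Proc) (e : Energy)
    (h : (specGame Tr τ).Win (.att p Q) e) :
    ∃ φ : Formula Act τ, StratF Tr τ (.att p Q) e φ ∧ exprF φ ≤ e :=
  cheapStrat_of_win h

end Spectroscopy
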